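/- Let g be a Lie algebra with invariant t ∈ (S²g)^g, and define φ = (1/4)[t¹², t²³] ∈ g⊗g⊗g, where t¹² = t ⊗ 1 and t²³ = 1 ⊗ t in U(g)^⊗3 and the bracket is the commutator. Then φ is totally antisymmetric, i.e., φ ∈ ∧³g ⊂ g^⊗3. -/
import Mathlib

open TensorProduct

variable {k : Type*} [Field k] [CharZero k]
variable {g : Type*} [LieRing g] [LieAlgebra k g]

/-- The element `[t¹², t²³] = Σᵢⱼ eᵢ ⊗ [fᵢ, eⱼ] ⊗ fⱼ ∈ g ⊗ g ⊗ g`,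
for `t = Σᵢ eᵢ ⊗ fᵢ ∈ g ⊗ g`. -/
noncomputable def tCommutator (k : Type*) {g : Type*} [Field k] [LieRing g]
    [LieAlgebra k g] (t : g ⊗[k] g) : g ⊗[k] (g ⊗[k] g) :=
  (TensorProduct.map LinearMap.id
      (TensorProduct.map (TensorProduct.lift (LieAlgebra.ad k g)) LinearMap.id))
    ((TensorProduct.map LinearMap.id ((TensorProduct.assoc k g g g).symm.toLinearMap))
      ((TensorProduct.assoc k g g (g ⊗[k] g)).toLinearMap (t ⊗ₜ[k] t)))

/-- The Cartan trivector `φ = (1/4)[t¹², t²³]`. -/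
noncomputable def cartanPhi (k : Type*) {g : Type*} [Field k] [LieRing g]
    [LieAlgebra k g] (t : g ⊗[k] g) : g ⊗[k] (g ⊗[k] g) :=
  (4 : k)⁻¹ • tCommutator k t

/-- Swap of the first two tensor factors of `g ⊗ (g ⊗ g)`. -/
noncomputable def swap12 (k : Type*) (g : Type*) [Field k] [AddCommGroup g]
    [Module k g] : g ⊗[k] (g ⊗[k] g) →ₗ[k] g ⊗[k] (g ⊗[k] g) :=
  (TensorProduct.assoc k g g g).toLinearMap ∘ₗ
    (TensorProduct.map (TensorProduct.comm k g g).toLinearMap LinearMap.id) ∘ₗ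
      (TensorProduct.assoc k g g g).symm.toLinearMap

/-- Swap of the last two tensor factors of `g ⊗ (g ⊗ g)`. -/
noncomputable def swap23 (k : Type*) (g : Type*) [Field k] [AddCommGroup g]
    [Module k g] : g ⊗[k] (g ⊗[k] g) →ₗ[k] g ⊗[k] (g ⊗[k] g) :=
  TensorProduct.map LinearMap.id (TensorProduct.comm k g g).toLinearMap

noncomputable def bigA (k : Type*) (g : Type*) [Field k] [LieRing g]
    [LieAlgebra k g] : (g ⊗[k] g) ⊗[k] (g ⊗[k] g) →ₗ[k] g ⊗[k] (g ⊗[k] g) :=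
  (TensorProduct.map LinearMap.id
      (TensorProduct.map (TensorProduct.lift (LieAlgebra.ad k g)) LinearMap.id)) ∘ₗ
    (TensorProduct.map LinearMap.id ((TensorProduct.assoc k g g g).symm.toLinearMap)) ∘ₗ
      (TensorProduct.assoc k g g (g ⊗[k] g)).toLinearMap

lemma bigA_tmul (a b c d : g) :
    bigA k g ((a ⊗ₜ[k] b) ⊗ₜ[k] (c ⊗ₜ[k] d)) = a ⊗ₜ[k] (⁅b, c⁆ ⊗ₜ[k] d) := by
  simp [bigA, TensorProduct.assoc_tmul, TensorProduct.assoc_symm_tmul]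

lemma swap12_tmul (a b c : g) :
    swap12 k g (a ⊗ₜ[k] (b ⊗ₜ[k] c)) = b ⊗ₜ[k] (a ⊗ₜ[k] c) := by
  simp [swap12, TensorProduct.assoc_tmul, TensorProduct.assoc_symm_tmul]

lemma swap23_tmul (a b c : g) :
    swap23 k g (a ⊗ₜ[k] (b ⊗ₜ[k] c)) = a ⊗ₜ[k] (c ⊗ₜ[k] b) := by
  simp [swap23]

noncomputable def Lmap (k : Type*) {g : Type*} [Field k] [LieRing g]
    [LieAlgebra k g] (u : g ⊗[k] g) : g →ₗ[k] g ⊗[k] g where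
  toFun y := ⁅y, u⁆
  map_add' a b := add_lie a b u
  map_smul' c y := smul_lie c y u

lemma lem1 (s u : g ⊗[k] g) :
    TensorProduct.map LinearMap.id (Lmap k u) s
      = bigA k g (s ⊗ₜ[k] u)
        + swap23 k g (bigA k g (s ⊗ₜ[k] (TensorProduct.comm k g g u))) := by
  induction s using TensorProduct.induction_on with
  | zero => simp [zero_tmul]
  | tmul a b =>
    induction u using TensorProduct.induction_on with
    | zero => simp [tmul_zero, Lmap]
    | tmul c d =>
      simp [Lmap, bigA_tmul, swap23_tmul, TensorProduct.LieModule.lie_tmul_right, tmul_add]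
    | add u v hu hv =>
      simp only [map_add, tmul_add] at hu hv ⊢
      rw [show (TensorProduct.map LinearMap.id (Lmap k (u + v))) (a ⊗ₜ[k] b)
            = (TensorProduct.map LinearMap.id (Lmap k u)) (a ⊗ₜ[k] b)
              + (TensorProduct.map LinearMap.id (Lmap k v)) (a ⊗ₜ[k] b) by
          simp [Lmap, lie_add, tmul_add]]
      rw [hu, hv]; abel
  | add s s' hs hs' =>
    simp only [map_add, add_tmul] at hs hs' ⊢
    rw [hs, hs']; abel

lemma lem2 (s u : g ⊗[k] g) :
    (TensorProduct.assoc k g g g).toLinearMap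
        (TensorProduct.map (Lmap k u) LinearMap.id s)
      = - swap12 k g (bigA k g ((TensorProduct.comm k g g u) ⊗ₜ[k] s))
        - bigA k g (u ⊗ₜ[k] s) := by
  induction s using TensorProduct.induction_on with
  | zero => simp [tmul_zero]
  | tmul c d =>
    induction u using TensorProduct.induction_on with
    | zero => simp [zero_tmul, Lmap]
    | tmul a b =>
      simp only [Lmap, LinearMap.coe_mk, AddHom.coe_mk, TensorProduct.map_tmul,
        LinearMap.id_coe, id_eq, TensorProduct.LieModule.lie_tmul_right, add_tmul, map_add,
        TensorProduct.assoc_tmul, TensorProduct.comm_tmul, bigA_tmul, swap12_tmul,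
        LinearEquiv.coe_coe]
      rw [← lie_skew c a, ← lie_skew c b]
      simp only [neg_tmul, tmul_neg]
      abel
    | add u v hu hv =>
      simp only [map_add, add_tmul] at hu hv ⊢
      rw [show (TensorProduct.map (Lmap k (u + v)) LinearMap.id) (c ⊗ₜ[k] d)
            = (TensorProduct.map (Lmap k u) LinearMap.id) (c ⊗ₜ[k] d)
              + (TensorProduct.map (Lmap k v) LinearMap.id) (c ⊗ₜ[k] d) by
          simp [Lmap, lie_add, add_tmul]]
      rw [map_add, hu, hv]; abel
  | add s s' hs hs' =>
    simp only [map_add, tmul_add] at hs hs' ⊢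
    rw [hs, hs']; abel

/-- if `t ∈ (S²g)^g` is symmetric and invariant, then
`φ = (1/4)[t¹², t²³]` is totally antisymmetric, i.e. `φ ∈ ∧³g ⊂ g^⊗3`: both adjacent
transpositions act on it by `-1`. -/
theorem statement_7 (t : g ⊗[k] g)
    (hsymm : TensorProduct.comm k g g t = t)
    (hinv : ∀ x : g, ⁅x, t⁆ = 0) :
    swap12 k g (cartanPhi k t) = - cartanPhi k t
      ∧ swap23 k g (cartanPhi k t) = - cartanPhi k t := by
  have hL : Lmap k t = 0 := by ext x; exact hinv x
  have h1 := lem1 (k := k) t t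
  have h2 := lem2 (k := k) t t
  rw [hL, hsymm] at h1 h2
  have hT : tCommutator k t = bigA k g (t ⊗ₜ[k] t) := rfl
  have e1 : (0 : g ⊗[k] (g ⊗[k] g)) = bigA k g (t ⊗ₜ[k] t) + swap23 k g (bigA k g (t ⊗ₜ[k] t)) := by
    rw [← h1]
    have : TensorProduct.map (LinearMap.id : g →ₗ[k] g) (0 : g →ₗ[k] g ⊗[k] g) = 0 := by
      ext a b; simp
    rw [this]; simp
  have e2 : (0 : g ⊗[k] (g ⊗[k] g)) = - swap12 k g (bigA k g (t ⊗ₜ[k] t)) - bigA k g (t ⊗ₜ[k] t) := by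
    rw [← h2]
    have : TensorProduct.map (0 : g →ₗ[k] g ⊗[k] g) (LinearMap.id : g →ₗ[k] g) = 0 := by
      ext a b; simp
    rw [this]; simp
  have h23 : swap23 k g (tCommutator k t) = - tCommutator k t := by
    rw [hT]; exact eq_neg_of_add_eq_zero_left (by rw [add_comm]; exact e1.symm)
  have h12 : swap12 k g (tCommutator k t) = - tCommutator k t := by
    rw [hT]
    have h := e2.symm
    rw [sub_eq_zero] at h
    exact neg_eq_iff_eq_neg.mp h
  constructor
  · rw [cartanPhi, map_smul, h12, smul_neg]
  · rw [cartanPhi, map_smul, h23, smul_neg]
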